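/- For a Hermitian matrix M with spectral decomposition M = V Σ Vᴴ, the matrix V Σ⁺ Vᴴ, where Σ⁺ replaces each eigenvalue λ by max(λ, 0), is the unique minimizer of ‖X − M‖_F over all Hermitian positive semidefinite matrices X. -/

import Mathlib

open Matrix ComplexOrder

noncomputable def frobNorm {d : ℕ} (A : Matrix (Fin d) (Fin d) ℂ) : ℝ :=
  Real.sqrt (∑ i, ∑ j, ‖A i j‖ ^ 2)

namespace PsdProjAux

noncomputable def frobSq {d : ℕ} (A : Matrix (Fin d) (Fin d) ℂ) : ℝ :=
  ∑ i, ∑ j, ‖A i j‖ ^ 2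

lemma frobSq_nonneg {d : ℕ} (A : Matrix (Fin d) (Fin d) ℂ) : 0 ≤ frobSq A := by
  unfold frobSq; positivity

lemma frobNorm_eq {d : ℕ} (A : Matrix (Fin d) (Fin d) ℂ) :
    frobNorm A = Real.sqrt (frobSq A) := rfl

lemma star_mul_self_re (z : ℂ) : (star z * z).re = ‖z‖ ^ 2 := by
  simp [Complex.mul_re, Complex.sq_norm, Complex.normSq_apply]

lemma frobSq_eq_retrace {d : ℕ} (A : Matrix (Fin d) (Fin d) ℂ) :
    frobSq A = (Matrix.trace (Aᴴ * A)).re := by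
  unfold frobSq
  rw [Matrix.trace]
  simp only [Matrix.diag, Matrix.mul_apply, Matrix.conjTranspose_apply]
  rw [Complex.re_sum, Finset.sum_comm]
  refine Finset.sum_congr rfl fun i _ => ?_
  rw [Complex.re_sum]
  exact Finset.sum_congr rfl fun j _ => (star_mul_self_re (A j i)).symm

lemma frobSq_conj {d : ℕ} (V A : Matrix (Fin d) (Fin d) ℂ)
    (h1 : star V * V = 1) (h2 : V * star V = 1) :
    frobSq (V * A * star V) = frobSq A := by
  rw [frobSq_eq_retrace, frobSq_eq_retrace]
  congr 1
  have e1 : (V * A * star V)ᴴ = V * Aᴴ * star V := by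
    simp only [Matrix.star_eq_conjTranspose, Matrix.conjTranspose_mul,
      Matrix.conjTranspose_conjTranspose, Matrix.mul_assoc]
  have key : (V * A * star V)ᴴ * (V * A * star V) = V * (Aᴴ * A) * star V := by
    rw [e1]
    simp only [Matrix.mul_assoc]
    rw [← Matrix.mul_assoc (star V) V, h1, Matrix.one_mul]
  rw [key, Matrix.trace_mul_cycle, ← Matrix.mul_assoc, h1, Matrix.one_mul]

lemma diag_ineq (r l : ℝ) (hr : 0 ≤ r) : (max l 0 - l) ^ 2 ≤ (r - l) ^ 2 := by
  rcases le_or_gt l 0 with h | h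
  · rw [max_eq_right h]; nlinarith
  · rw [max_eq_left h.le]; nlinarith

lemma diag_eq (r l : ℝ) (hr : 0 ≤ r) (h : (r - l) ^ 2 = (max l 0 - l) ^ 2) :
    r = max l 0 := by
  rcases le_or_gt l 0 with h' | h'
  · rw [max_eq_right h'] at h ⊢; nlinarith
  · rw [max_eq_left h'.le] at h ⊢; nlinarith

end PsdProjAux

open PsdProjAux in
theorem psd_projection_eigenvalue_truncation (d : ℕ)
    (M : Matrix (Fin d) (Fin d) ℂ) (hM : M.IsHermitian) :
    let Xhat : Matrix (Fin d) (Fin d) ℂ :=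
      (hM.eigenvectorUnitary : Matrix (Fin d) (Fin d) ℂ) *
        Matrix.diagonal (fun i => ((max (hM.eigenvalues i) 0 : ℝ) : ℂ)) *
        (star (hM.eigenvectorUnitary : Matrix (Fin d) (Fin d) ℂ))
    Xhat.PosSemidef ∧
    (∀ X : Matrix (Fin d) (Fin d) ℂ, X.PosSemidef →
      frobNorm (Xhat - M) ≤ frobNorm (X - M)) ∧
    (∀ X : Matrix (Fin d) (Fin d) ℂ, X.PosSemidef →
      frobNorm (X - M) = frobNorm (Xhat - M) → X = Xhat) := by
  intro Xhat
  set V : Matrix (Fin d) (Fin d) ℂ := (hM.eigenvectorUnitary : Matrix (Fin d) (Fin d) ℂ) with hVdef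
  have hV1 : star V * V = 1 := Matrix.mem_unitaryGroup_iff'.mp hM.eigenvectorUnitary.2
  have hV2 : V * star V = 1 := Matrix.mem_unitaryGroup_iff.mp hM.eigenvectorUnitary.2
  set lam : Fin d → ℝ := hM.eigenvalues with hlam
  set D : Matrix (Fin d) (Fin d) ℂ := Matrix.diagonal (fun i => (lam i : ℂ)) with hD
  set Dp : Matrix (Fin d) (Fin d) ℂ := Matrix.diagonal (fun i => ((max (lam i) 0 : ℝ) : ℂ)) with hDp
  have hspec : M = V * D * star V := by
    have := hM.spectral_theorem
    rw [Unitary.conjStarAlgAut_apply] at this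
    exact this
  have hXhat : Xhat = V * Dp * star V := rfl
  have hVXV : ∀ X : Matrix (Fin d) (Fin d) ℂ, V * (star V * X * V) * star V = X := by
    intro X
    simp only [Matrix.mul_assoc]
    rw [hV2, Matrix.mul_one, ← Matrix.mul_assoc, hV2, Matrix.one_mul]
  have hXhatPSD : Xhat.PosSemidef := by
    rw [hXhat]
    have hdp : Dp.PosSemidef := by
      rw [hDp]
      refine Matrix.posSemidef_diagonal_iff.mpr fun i => ?_
      rw [Complex.zero_le_real]
      exact le_max_right _ _
    have := hdp.mul_mul_conjTranspose_same V
    rwa [Matrix.star_eq_conjTranspose]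
  have hfactor : ∀ X : Matrix (Fin d) (Fin d) ℂ,
      X - M = V * ((star V * X * V) - D) * star V := by
    intro X
    rw [Matrix.mul_sub, Matrix.sub_mul, hspec, hVXV]
  have hXhatD : frobSq (Xhat - M) = ∑ i, (max (lam i) 0 - lam i) ^ 2 := by
    have h1 : Xhat - M = V * (Dp - D) * star V := by
      rw [hXhat, hspec, ← Matrix.sub_mul, ← Matrix.mul_sub]
    rw [h1, frobSq_conj V _ hV1 hV2]
    unfold frobSq
    have h2 : ∀ i j, ‖(Dp - D) i j‖ ^ 2 =
        if j = i then (max (lam i) 0 - lam i) ^ 2 else 0 := by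
      intro i j
      by_cases h : j = i
      · subst h
        have : (Dp - D) j j = ((max (lam j) 0 - lam j : ℝ) : ℂ) := by
          simp [hDp, hD, Matrix.sub_apply, Complex.ofReal_sub]
        rw [this, if_pos rfl, Complex.norm_real, Real.norm_eq_abs, sq_abs]
      · have : (Dp - D) i j = 0 := by
          simp [hDp, hD, Matrix.sub_apply, Matrix.diagonal_apply_ne' _ h]
        rw [this, if_neg h]
        simp
    calc ∑ i, ∑ j, ‖(Dp - D) i j‖ ^ 2
        = ∑ i, ∑ j, if j = i then (max (lam i) 0 - lam i) ^ 2 else 0 :=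
          Finset.sum_congr rfl fun i _ => Finset.sum_congr rfl fun j _ => h2 i j
      _ = ∑ i, (max (lam i) 0 - lam i) ^ 2 := by
          refine Finset.sum_congr rfl fun i _ => ?_
          rw [Finset.sum_ite_eq' Finset.univ i (fun _ => (max (lam i) 0 - lam i) ^ 2)]
          simp
  have keydiag : ∀ (X : Matrix (Fin d) (Fin d) ℂ), X.PosSemidef →
      ∀ i, ∃ r : ℝ, 0 ≤ r ∧ (star V * X * V) i i = (r : ℂ) := by
    intro X hX i
    have hY : (star V * X * V).PosSemidef := by
      have := hX.conjTranspose_mul_mul_same V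
      rwa [Matrix.star_eq_conjTranspose]
    have h0 := hY.dotProduct_mulVec_nonneg (Pi.single i 1)
    have hval : dotProduct (star (Pi.single i 1)) ((star V * X * V) *ᵥ Pi.single i 1)
        = (star V * X * V) i i := by
      rw [Matrix.mulVec_single]
      simp [dotProduct, Pi.single_apply, apply_ite]
    rw [hval] at h0
    rw [Complex.nonneg_iff] at h0
    exact ⟨((star V * X * V) i i).re, h0.1, by apply Complex.ext <;> simp [← h0.2]⟩
  have hdiagnorm : ∀ (Y : Matrix (Fin d) (Fin d) ℂ) (i : Fin d) (r : ℝ),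
      Y i i = (r : ℂ) → ‖(Y - D) i i‖ ^ 2 = (r - lam i) ^ 2 := by
    intro Y i r hr
    have : (Y - D) i i = ((r - lam i : ℝ) : ℂ) := by
      simp [Matrix.sub_apply, hr, hD, Complex.ofReal_sub]
    rw [this, Complex.norm_real, Real.norm_eq_abs, sq_abs]
  have rowbound : ∀ (X : Matrix (Fin d) (Fin d) ℂ), X.PosSemidef → ∀ i,
      (max (lam i) 0 - lam i) ^ 2 ≤ ∑ j, ‖((star V * X * V) - D) i j‖ ^ 2 := by
    intro X hX i
    obtain ⟨r, hr0, hr⟩ := keydiag X hX i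
    calc (max (lam i) 0 - lam i) ^ 2 ≤ (r - lam i) ^ 2 := diag_ineq r (lam i) hr0
      _ = ‖((star V * X * V) - D) i i‖ ^ 2 := (hdiagnorm _ i r hr).symm
      _ ≤ ∑ j, ‖((star V * X * V) - D) i j‖ ^ 2 :=
          Finset.single_le_sum (f := fun j => ‖((star V * X * V) - D) i j‖ ^ 2)
            (fun j _ => by positivity) (Finset.mem_univ i)
  have hXsq : ∀ X : Matrix (Fin d) (Fin d) ℂ,
      frobSq (X - M) = ∑ i, ∑ j, ‖((star V * X * V) - D) i j‖ ^ 2 := by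
    intro X
    rw [hfactor X, frobSq_conj V _ hV1 hV2]
    rfl
  have main : ∀ (X : Matrix (Fin d) (Fin d) ℂ), X.PosSemidef →
      frobSq (Xhat - M) ≤ frobSq (X - M) := by
    intro X hX
    rw [hXsq X, hXhatD]
    exact Finset.sum_le_sum fun i _ => rowbound X hX i
  refine ⟨hXhatPSD, fun X hX => ?_, fun X hX heq => ?_⟩
  · rw [frobNorm_eq, frobNorm_eq]
    exact Real.sqrt_le_sqrt (main X hX)
  · have hsq : frobSq (X - M) = frobSq (Xhat - M) := by
      have h2 := congrArg (fun t => t ^ 2) heq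
      simpa [frobNorm_eq, Real.sq_sqrt (frobSq_nonneg _)] using h2
    have hsum : ∑ i, (max (lam i) 0 - lam i) ^ 2
        = ∑ i, ∑ j, ‖((star V * X * V) - D) i j‖ ^ 2 := by
      rw [← hXhatD, ← hsq, hXsq X]
    have hrow : ∀ i, (max (lam i) 0 - lam i) ^ 2
        = ∑ j, ‖((star V * X * V) - D) i j‖ ^ 2 := fun i =>
      (Finset.sum_eq_sum_iff_of_le (fun i _ => rowbound X hX i)).mp hsum i (Finset.mem_univ i)
    have hYDp : (star V * X * V) = Dp := by
      ext i j
      obtain ⟨r, hr0, hr⟩ := keydiag X hX i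
      have hdiag := hdiagnorm (star V * X * V) i r hr
      have hsplit : ‖((star V * X * V) - D) i i‖ ^ 2
            + ∑ j ∈ Finset.univ.erase i, ‖((star V * X * V) - D) i j‖ ^ 2
          = ∑ j, ‖((star V * X * V) - D) i j‖ ^ 2 :=
        Finset.add_sum_erase _ (fun j => ‖((star V * X * V) - D) i j‖ ^ 2) (Finset.mem_univ i)
    -- diagonal bound
      have hge : (max (lam i) 0 - lam i) ^ 2 ≤ ‖((star V * X * V) - D) i i‖ ^ 2 := by
        rw [hdiag]; exact diag_ineq r (lam i) hr0
      have hnn : ∀ j ∈ Finset.univ.erase i,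
          (0:ℝ) ≤ ‖((star V * X * V) - D) i j‖ ^ 2 := fun j _ => by positivity
      have hsumnn := Finset.sum_nonneg hnn
      have hdiageq : ‖((star V * X * V) - D) i i‖ ^ 2 = (max (lam i) 0 - lam i) ^ 2 := by
        have := hrow i
        nlinarith [hsplit, hge, hsumnn]
      have herase0 : ∑ j ∈ Finset.univ.erase i, ‖((star V * X * V) - D) i j‖ ^ 2 = 0 := by
        have := hrow i
        nlinarith [hsplit, hge, hsumnn]
      by_cases h : i = j
      · subst h
        have heq2 : (r - lam i) ^ 2 = (max (lam i) 0 - lam i) ^ 2 := by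
          rw [← hdiag]; exact hdiageq
        have hrmax : r = max (lam i) 0 := diag_eq r (lam i) hr0 heq2
        rw [hr, hrmax, hDp, Matrix.diagonal_apply_eq]
      · have hzero : ‖((star V * X * V) - D) i j‖ ^ 2 = 0 :=
          (Finset.sum_eq_zero_iff_of_nonneg hnn).mp herase0 j
            (Finset.mem_erase.mpr ⟨fun hc => h hc.symm, Finset.mem_univ j⟩)
        have h0 : ((star V * X * V) - D) i j = 0 :=
          norm_eq_zero.mp (pow_eq_zero_iff (n := 2) (by norm_num) |>.mp hzero)
        have hYij : (star V * X * V) i j = D i j := sub_eq_zero.mp (by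
          simpa [Matrix.sub_apply] using h0)
        rw [hYij, hD, hDp, Matrix.diagonal_apply_ne _ h, Matrix.diagonal_apply_ne _ h]
    rw [← hVXV X, hYDp, hXhat]
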